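/- arXiv:0902.1256 — 2 statements merged into one kernel-verified Lean document; each statement's English description precedes it below -/
import Mathlib

section
/- A relational structure 𝔸 is homomorphically equivalent to a structure of tree width at most w if and only if the core of 𝔸 has tree width at most w. -/
/-- A relational structure over a vocabulary `σ` (with arity function `ar`)
on a carrier type `V`: a (finite) universe together with a relation for each
symbol, all of whose tuples take values in the universe. -/
structure Strc (σ : Type) (ar : σ → ℕ) (V : Type) where
  univ : Set V
  rel : ∀ R : σ, Set (Fin (ar R) → V)
  mem_univ : ∀ R, ∀ t ∈ rel R, ∀ i, t i ∈ univ

/-- `f` is a homomorphism from `A` to `B`: it maps the universe into the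
universe and every tuple of every relation to a tuple of the corresponding
relation. -/
def IsHom {σ : Type} {ar : σ → ℕ} {V W : Type}
    (A : Strc σ ar V) (B : Strc σ ar W) (f : V → W) : Prop :=
  Set.MapsTo f A.univ B.univ ∧ ∀ R, ∀ t ∈ A.rel R, (fun i => f (t i)) ∈ B.rel R

/-- `A` and `B` are homomorphically equivalent. -/
def HomEquiv {σ : Type} {ar : σ → ℕ} {V W : Type}
    (A : Strc σ ar V) (B : Strc σ ar W) : Prop :=
  (∃ f, IsHom A B f) ∧ ∃ g, IsHom B A g

/-- `A` is a substructure of `B` (both structures on the same ambient carrier):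
the universe is a subset and each relation is contained in the corresponding one. -/
def Substruct {σ : Type} {ar : σ → ℕ} {V : Type} (A B : Strc σ ar V) : Prop :=
  A.univ ⊆ B.univ ∧ ∀ R, A.rel R ⊆ B.rel R

/-- `A` is a proper substructure of `B`. -/
def ProperSubstruct {σ : Type} {ar : σ → ℕ} {V : Type} (A B : Strc σ ar V) : Prop :=
  Substruct A B ∧ A ≠ B

/-- `A` is a core: there is no homomorphism from `A` to a proper substructure of `A`. -/
def IsCore {σ : Type} {ar : σ → ℕ} {V : Type} (A : Strc σ ar V) : Prop :=
  ∀ A' : Strc σ ar V, ProperSubstruct A' A → ¬ ∃ f, IsHom A A' f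

/-- `A'` is a core of `A`: a substructure of `A` which is a core and to which
`A` has a homomorphism. -/
def IsCoreOf {σ : Type} {ar : σ → ℕ} {V : Type} (A' A : Strc σ ar V) : Prop :=
  Substruct A' A ∧ (∃ f, IsHom A A' f) ∧ IsCore A'

/-- `A` and `B` are isomorphic: there is a homomorphism `f` from `A` to `B`
which is a bijection between the universes and whose inverse is a homomorphism. -/
def Isomorphic {σ : Type} {ar : σ → ℕ} {V W : Type}
    (A : Strc σ ar V) (B : Strc σ ar W) : Prop :=
  ∃ f g, IsHom A B f ∧ IsHom B A g ∧ Set.BijOn f A.univ B.univ ∧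
    Set.InvOn g f A.univ B.univ

/-- The Gaifman (primal) graph of a structure: vertices are the elements of the
universe, and two distinct elements are adjacent if they occur together in some
tuple of some relation. -/
def gaifman {σ : Type} {ar : σ → ℕ} {V : Type} (A : Strc σ ar V) :
    SimpleGraph ↥A.univ where
  Adj a b := a ≠ b ∧ ∃ R, ∃ t ∈ A.rel R, (a : V) ∈ Set.range t ∧ (b : V) ∈ Set.range t
  symm := by
    constructor
    rintro a b ⟨hab, R, t, ht, ha, hb⟩
    exact ⟨hab.symm, R, t, ht, hb, ha⟩
  loopless := by constructor; rintro a ⟨h, -⟩; exact h rfl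

/-- `G` has tree width at most `w`: there is a tree decomposition all of whose
bags have at most `w + 1` elements, i.e. a tree `T` with a bag assigned to each
node such that every vertex appears in a (nonempty) connected set of bags and
every edge is contained in some bag. -/
def TreewidthLE {X : Type} (G : SimpleGraph X) (w : ℕ) : Prop :=
  ∃ (ι : Type) (T : SimpleGraph ι) (bags : ι → Set X),
    T.IsTree ∧
    (∀ v : X, (T.induce {t | v ∈ bags t}).Connected) ∧
    (∀ a b : X, G.Adj a b → ∃ t, a ∈ bags t ∧ b ∈ bags t) ∧
    (∀ t, (bags t).ncard ≤ w + 1)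

/-!
If `𝔸` is homomorphically equivalent to `𝔹`, so is its core `𝔸'`, and every homomorphism
`𝔸' → 𝔹` is injective: composing it with a homomorphism back gives an endomorphism of a core,
which is onto, hence bijective. So the Gaifman graph of `𝔸'` embeds into that of `𝔹`, and tree
width is monotone under subgraphs. Conversely `𝔸` is homomorphically equivalent to its core.
Cores exist: among the substructures `C ⊆ 𝔸` receiving a homomorphism from `𝔸`, one with the
smallest universe is a core, because a map `C → C' ⊆ C` is then injective on the universe and so,
by finiteness, onto every relation of `C`.
-/

open Set Function

variable {σ : Type} {ar : σ → ℕ} {U V W : Type}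

lemma Substruct.antisymm {A B : Strc σ ar V} (hAB : Substruct A B) (hBA : Substruct B A) :
    A = B := by
  obtain ⟨univA, relA, _⟩ := A
  obtain ⟨univB, relB, _⟩ := B
  have huniv : univA = univB := hAB.1.antisymm hBA.1
  have hrel : relA = relB := funext fun R => (hAB.2 R).antisymm (hBA.2 R)
  subst huniv hrel
  rfl

lemma Substruct.trans {A B C : Strc σ ar V} (hAB : Substruct A B) (hBC : Substruct B C) :
    Substruct A C :=
  ⟨hAB.1.trans hBC.1, fun R => (hAB.2 R).trans (hBC.2 R)⟩

lemma Substruct.isHom_id {A B : Strc σ ar V} (h : Substruct A B) : IsHom A B id :=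
  ⟨fun _ hx => h.1 hx, fun R _ ht => h.2 R ht⟩

lemma IsHom.comp {A : Strc σ ar U} {B : Strc σ ar V} {C : Strc σ ar W} {f : U → V} {g : V → W}
    (hg : IsHom B C g) (hf : IsHom A B f) : IsHom A C (g ∘ f) :=
  ⟨hg.1.comp hf.1, fun R t ht => hg.2 R _ (hf.2 R t ht)⟩

def Strc.map (A : Strc σ ar V) (f : V → W) : Strc σ ar W where
  univ := f '' A.univ
  rel R := (fun t i => f (t i)) '' A.rel R
  mem_univ := by
    rintro R _ ⟨t, ht, rfl⟩ i
    exact mem_image_of_mem f (A.mem_univ R t ht i)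

lemma Strc.isHom_map (A : Strc σ ar V) (f : V → W) : IsHom A (A.map f) f :=
  ⟨mapsTo_image f _, fun _ _ ht => mem_image_of_mem _ ht⟩

lemma IsHom.map_substruct {A : Strc σ ar V} {B : Strc σ ar W} {f : V → W} (hf : IsHom A B f) :
    Substruct (A.map f) B :=
  ⟨image_subset_iff.2 hf.1, fun R => image_subset_iff.2 (hf.2 R)⟩

lemma Substruct.eq_of_isHom_injOn [Finite V] {A B : Strc σ ar V} {f : V → V}
    (hBA : Substruct B A) (hf : IsHom A B f) (hinj : InjOn f A.univ) : B = A := by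
  refine hBA.antisymm (Substruct.trans ⟨?_, fun R => ?_⟩ hf.map_substruct)
  · have hmaps : MapsTo f A.univ A.univ := fun _ hx => hBA.1 (hf.1 hx)
    exact ((toFinite _).injOn_iff_bijOn_of_mapsTo hmaps |>.1 hinj).surjOn
  · have hmaps : MapsTo (fun t i => f (t i)) (A.rel R) (A.rel R) :=
      fun t ht => hBA.2 R (hf.2 R t ht)
    have hinjR : InjOn (fun t i => f (t i)) (A.rel R) := fun t ht s hs hts =>
      funext fun i => hinj (A.mem_univ R t ht i) (A.mem_univ R s hs i) (congrFun hts i)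
    exact ((toFinite _).injOn_iff_bijOn_of_mapsTo hmaps |>.1 hinjR).surjOn

lemma exists_isCoreOf [Finite V] (A : Strc σ ar V) : ∃ C, IsCoreOf C A := by
  let S : Set (Strc σ ar V) := {C | Substruct C A ∧ ∃ f, IsHom A C f}
  have hAA : Substruct A A := ⟨subset_rfl, fun _ => subset_rfl⟩
  have hS : S.Nonempty := ⟨A, hAA, id, hAA.isHom_id⟩
  let card : Strc σ ar V → ℕ := fun C => C.univ.ncard
  let C := argminOn card S hS
  obtain ⟨hCA, f, hf⟩ : C ∈ S := argminOn_mem card S hS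
  refine ⟨C, hCA, ⟨f, hf⟩, fun D ⟨hDC, hne⟩ ⟨g, hg⟩ => hne (hDC.eq_of_isHom_injOn hg ?_)⟩
  have hmapS : C.map g ∈ S :=
    ⟨hg.map_substruct.trans (hDC.trans hCA), g ∘ f, (C.isHom_map g).comp hf⟩
  exact injOn_of_ncard_image_eq (le_antisymm ncard_image_le (argminOn_le card S hmapS))

lemma IsCore.map_eq_self {A : Strc σ ar V} (hA : IsCore A) {k : V → V} (hk : IsHom A A k) :
    A.map k = A := by
  by_contra hne
  exact hA _ ⟨hk.map_substruct, hne⟩ ⟨k, A.isHom_map k⟩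

lemma IsCore.injOn_of_isHom_self [Finite V] {A : Strc σ ar V} (hA : IsCore A) {k : V → V}
    (hk : IsHom A A k) : InjOn k A.univ := by
  have hsurj : SurjOn k A.univ A.univ := by
    intro x hx
    rw [← hA.map_eq_self hk] at hx
    exact hx
  exact ((toFinite _).surjOn_iff_bijOn_of_mapsTo hk.1 |>.1 hsurj).injOn

lemma IsCore.injOn_of_isHom [Finite V] {A : Strc σ ar V} {B : Strc σ ar W} (hA : IsCore A)
    {f : V → W} {g : W → V} (hf : IsHom A B f) (hg : IsHom B A g) : InjOn f A.univ :=
  (hA.injOn_of_isHom_self (hg.comp hf)).of_comp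

def IsHom.gaifmanHom {A : Strc σ ar V} {B : Strc σ ar W} {f : V → W} (hf : IsHom A B f)
    (hinj : InjOn f A.univ) : gaifman A →g gaifman B where
  toFun v := ⟨f v, hf.1 v.2⟩
  map_rel' := by
    rintro a b ⟨hab, R, t, ht, ⟨i, hi⟩, ⟨j, hj⟩⟩
    refine ⟨fun h => hab (Subtype.ext (hinj a.2 b.2 (congrArg Subtype.val h))), R, _,
      hf.2 R t ht, ⟨i, ?_⟩, ⟨j, ?_⟩⟩ <;> simp [hi, hj]

lemma IsHom.gaifmanHom_injective {A : Strc σ ar V} {B : Strc σ ar W} {f : V → W}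
    (hf : IsHom A B f) (hinj : InjOn f A.univ) : Injective (hf.gaifmanHom hinj) :=
  fun a b hab => Subtype.ext (hinj a.2 b.2 (congrArg Subtype.val hab))

lemma TreewidthLE.comap {X Y : Type} [Finite Y] {G : SimpleGraph X} {H : SimpleGraph Y}
    {w : ℕ} (h : TreewidthLE H w) (φ : G →g H) (hφ : Injective φ) : TreewidthLE G w := by
  obtain ⟨ι, T, bags, hT, hconn, hedge, hcard⟩ := h
  refine ⟨ι, T, fun t => φ ⁻¹' bags t, hT, fun v => hconn (φ v),
    fun a b hab => hedge _ _ (φ.map_adj hab), fun t => ?_⟩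
  exact (ncard_le_ncard_of_injOn φ (fun _ hv => hv) hφ.injOn).trans (hcard t)

theorem homEquiv_treewidth_iff_core_treewidth_general {σ V : Type} [Finite V]
    {ar : σ → ℕ} (𝔸 : Strc σ ar V) (w : ℕ) :
    (∃ (W : Type) (_ : Finite W) (𝔹 : Strc σ ar W),
        HomEquiv 𝔸 𝔹 ∧ TreewidthLE (gaifman 𝔹) w) ↔
      (∀ 𝔸' : Strc σ ar V, IsCoreOf 𝔸' 𝔸 → TreewidthLE (gaifman 𝔸') w) := by
  constructor
  · rintro ⟨W, _, 𝔹, ⟨⟨f, hf⟩, g, hg⟩, htw⟩ 𝔸' ⟨h𝔸', ⟨k, hk⟩, hcore⟩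
    have hf' : IsHom 𝔸' 𝔹 f := hf.comp h𝔸'.isHom_id
    have hinj : InjOn f 𝔸'.univ := hcore.injOn_of_isHom hf' (hk.comp hg)
    exact htw.comap (hf'.gaifmanHom hinj) (hf'.gaifmanHom_injective hinj)
  · intro hcore
    obtain ⟨𝔸', h𝔸'⟩ := exists_isCoreOf 𝔸
    exact ⟨V, inferInstance, 𝔸', ⟨h𝔸'.2.1, id, h𝔸'.1.isHom_id⟩, hcore 𝔸' h𝔸'⟩

/-- a structure is homomorphically equivalent to a (finite)
structure of tree width at most `w` iff its core has tree width at most `w`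
(tree width of a structure being the tree width of its Gaifman graph). -/
theorem homEquiv_treewidth_iff_core_treewidth {σ V : Type} [Finite σ] [Finite V]
    {ar : σ → ℕ} (𝔸 : Strc σ ar V) (w : ℕ) :
    (∃ (W : Type) (_ : Finite W) (𝔹 : Strc σ ar W),
        HomEquiv 𝔸 𝔹 ∧ TreewidthLE (gaifman 𝔹) w) ↔
      (∀ 𝔸' : Strc σ ar V, IsCoreOf 𝔸' 𝔸 → TreewidthLE (gaifman 𝔸') w) :=
  homEquiv_treewidth_iff_core_treewidth_general 𝔸 w
end

section
/- Let R^𝔹 ⊆ B^r be an r-ary relation on a finite set B with |B| ≥ 1. Then R^𝔹 has at most |R^𝔹| · (|B| − 1) · r bad prefixes. -/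
/-!
Send a bad prefix `(b_1, …, b_s)` to the triple `(c, s, b_s)`, where `c ∈ R` is a tuple extending
`(b_1, …, b_{s-1})`. Since `c` does not extend `(b_1, …, b_s)`, the letter `b_s` differs from `c_s`,
and the prefix is recovered from the triple as the first `s - 1` entries of `c` followed by `b_s`.
Hence the bad prefixes are covered by the image of the triples `(c, i, b)` with `c ∈ R` and
`b ≠ c_i`, of which there are `|R| · r · (|B| - 1)`.
-/

/-- The set of bad prefixes of an `r`-ary relation `R` on `B`: tuples
`(b_1, …, b_s)` with `1 ≤ s ≤ r` such that (1) no tuple of `R` extends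
`(b_1, …, b_s)`, and (2) some tuple of `R` extends `(b_1, …, b_{s-1})`. -/
def badPrefixes {B : Type} {r : ℕ} (R : Set (Fin r → B)) :
    Set ((s : ℕ) × (Fin s → B)) :=
  {p | 1 ≤ p.1 ∧ p.1 ≤ r ∧
    (¬ ∃ c ∈ R, ∀ i : Fin r, (h : (i : ℕ) < p.1) → c i = p.2 ⟨(i : ℕ), h⟩) ∧
    (∃ c ∈ R, ∀ i : Fin r, (h : (i : ℕ) < p.1 - 1) →
      c i = p.2 ⟨(i : ℕ), lt_of_lt_of_le h (Nat.sub_le _ _)⟩)}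

open Finset

section Mismatches

variable {ι B : Type*} [Fintype ι] [Fintype B]

theorem card_filter_snd_ne_apply [DecidableEq B] (c : ι → B) :
    #{x : ι × B | x.2 ≠ c x.1} = Fintype.card ι * (Fintype.card B - 1) := by
  rw [card_filter, Fintype.sum_prod_type]
  simp only [sum_boole, filter_ne', mem_univ, card_erase_of_mem, card_univ, sum_const,
    smul_eq_mul, Nat.cast_id]

def mismatches (R : Set (ι → B)) : Set ((ι → B) × ι × B) :=
  {q | q.1 ∈ R ∧ q.2.2 ≠ q.1 q.2.1}

theorem ncard_mismatches (R : Set (ι → B)) :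
    (mismatches R).ncard = R.ncard * (Fintype.card ι * (Fintype.card B - 1)) := by
  classical
  have hR : mismatches R = ↑{q ∈ R.toFinset ×ˢ (univ : Finset (ι × B)) | q.2.2 ≠ q.1 q.2.1} := by
    ext
    simp [mismatches]
  rw [hR, Set.ncard_coe_finset, card_filter, sum_product, Set.ncard_eq_toFinset_card' R]
  simp only [← card_filter, card_filter_snd_ne_apply, sum_const, smul_eq_mul]

end Mismatches

section BadPrefixes

variable {B : Type} {r : ℕ}

def takeSnoc (c : Fin r → B) (i : Fin r) (b : B) : (s : ℕ) × (Fin s → B) :=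
  ⟨i + 1, Fin.snoc (Fin.take i i.isLt.le c) b⟩

theorem badPrefixes_subset_image_mismatches (R : Set (Fin r → B)) :
    badPrefixes R ⊆ (fun q => takeSnoc q.1 q.2.1 q.2.2) '' mismatches R := by
  rintro ⟨s, p⟩ ⟨hs, hsr, hext, c, hcR, hc⟩
  dsimp only at hs hsr hext hc
  obtain ⟨k, rfl⟩ : ∃ k, s = k + 1 := ⟨s - 1, by omega⟩
  refine ⟨(c, ⟨k, hsr⟩, p (Fin.last k)), ⟨hcR, fun hlast => hext ⟨c, hcR, fun i hi => ?_⟩⟩, ?_⟩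
  · rcases Nat.lt_succ_iff_lt_or_eq.mp hi with hik | hik
    · exact hc i hik
    · obtain rfl : i = ⟨k, hsr⟩ := Fin.ext hik
      exact hlast.symm
  · have hinit : Fin.take k (Nat.le_of_succ_le hsr) c = Fin.init p :=
      funext fun j => hc _ (by simp)
    simp only [takeSnoc, hinit, Fin.snoc_init_self]

end BadPrefixes

theorem badPrefixes_card_le_general {B : Type} [Fintype B]
    {r : ℕ} (R : Set (Fin r → B)) :
    (badPrefixes R).ncard ≤ R.ncard * (Fintype.card B - 1) * r := by
  calc (badPrefixes R).ncard
      ≤ ((fun q => takeSnoc q.1 q.2.1 q.2.2) '' mismatches R).ncard :=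
        Set.ncard_le_ncard (badPrefixes_subset_image_mismatches R)
    _ ≤ (mismatches R).ncard := Set.ncard_image_le
    _ = R.ncard * (Fintype.card B - 1) * r := by
        rw [ncard_mismatches, Fintype.card_fin]
        ring

/-- an `r`-ary relation `R` on a finite set `B` with `|B| ≥ 1` has
at most `|R| · (|B| − 1) · r` bad prefixes. -/
theorem badPrefixes_card_le {B : Type} [Fintype B] (hB : 1 ≤ Fintype.card B)
    {r : ℕ} (R : Set (Fin r → B)) :
    (badPrefixes R).ncard ≤ R.ncard * (Fintype.card B - 1) * r :=
  badPrefixes_card_le_general R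
end
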